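/- arXiv:2006.03551 — 3 statements merged into one kernel-verified Lean document; each statement's English description precedes it below -/
import Mathlib

section
/- Let P be a Poisson algebra over a field 𝔽. If P is strongly solvable with strong derived length n, then the Poisson ideal δ̃₁(P) = {P,P}P is associative nilpotent of index at most 2^n − 1, i.e. every product of 2^n − 1 elements of δ̃₁(P) is zero. -/
/-- A Poisson bracket on a commutative associative unital `F`-algebra `P`:
an `F`-bilinear, alternating bracket satisfying the Jacobi identity and the
Leibniz rule `{a·b, c} = a·{b,c} + b·{a,c}`. -/
structure PoissonBracket (F P : Type*) [Field F] [CommRing P] [Algebra F P] where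
  bracket : P → P → P
  add_left : ∀ a b c : P, bracket (a + b) c = bracket a c + bracket b c
  smul_left : ∀ (r : F) (a b : P), bracket (r • a) b = r • bracket a b
  add_right : ∀ a b c : P, bracket a (b + c) = bracket a b + bracket a c
  smul_right : ∀ (r : F) (a b : P), bracket a (r • b) = r • bracket a b
  alt : ∀ a : P, bracket a a = 0
  jacobi : ∀ a b c : P,
    bracket (bracket a b) c + bracket (bracket b c) a + bracket (bracket c a) b = 0
  leibniz : ∀ a b c : P, bracket (a * b) c = a * bracket b c + b * bracket a c

namespace PoissonBracket

variable {F P : Type*} [Field F] [CommRing P] [Algebra F P]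

/-- `{A, B}`: the `F`-span of all brackets of elements of `A` with elements of `B`. -/
def lieSpan (pb : PoissonBracket F P) (A B : Submodule F P) : Submodule F P :=
  Submodule.span F {z : P | ∃ a ∈ A, ∃ b ∈ B, z = pb.bracket a b}

/-- Upper derived series: `δ̃₀(P) = P`, `δ̃ₙ₊₁(P) = {δ̃ₙ(P), δ̃ₙ(P)}·P`. -/
def udelta (pb : PoissonBracket F P) : ℕ → Submodule F P
  | 0 => ⊤
  | n + 1 => pb.lieSpan (pb.udelta n) (pb.udelta n) * ⊤

/-- Derived series of a Lie ideal `I`: `δ₀(I) = I`, `δₙ₊₁(I) = {δₙ(I), δₙ(I)}`. -/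
def dseries (pb : PoissonBracket F P) (I : Submodule F P) : ℕ → Submodule F P
  | 0 => I
  | n + 1 => pb.lieSpan (pb.dseries I n) (pb.dseries I n)

/-- Lower central series of a Lie ideal `I`, indexed so that `lcs I 1 = γ₁(I) = I`
and `lcs I (n+1) = γₙ₊₁(I) = {γₙ(I), I}` for `n ≥ 1` (index `0` is a dummy equal to `I`). -/
def lcs (pb : PoissonBracket F P) (I : Submodule F P) : ℕ → Submodule F P
  | 0 => I
  | 1 => I
  | n + 2 => pb.lieSpan (pb.lcs I (n + 1)) I

/-- Upper Lie power series: `P⁽¹⁾ = P`, `P⁽ⁿ⁾ = {P⁽ⁿ⁻¹⁾, P}·P` for `n > 1`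
(index `0` is a dummy equal to `P`). -/
def ulps (pb : PoissonBracket F P) : ℕ → Submodule F P
  | 0 => ⊤
  | 1 => ⊤
  | n + 2 => pb.lieSpan (pb.ulps (n + 1)) ⊤ * ⊤

/-- A Poisson ideal: an ideal for the associative product which is also a Lie ideal. -/
def IsPoissonIdeal (pb : PoissonBracket F P) (I : Submodule F P) : Prop :=
  (∀ x ∈ I, ∀ p : P, p * x ∈ I) ∧ (∀ x ∈ I, ∀ p : P, pb.bracket x p ∈ I)

/-- The Poisson ideal generated by a set `S`: the smallest Poisson ideal containing `S`. -/
def poissonSpan (pb : PoissonBracket F P) (S : Set P) : Submodule F P :=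
  sInf {I : Submodule F P | pb.IsPoissonIdeal I ∧ S ⊆ I}

end PoissonBracket

/-!
By the Leibniz rule, `x y {a, b}` is a combination of terms `{u, v} p` with `u, v ∈ I` whenever
`x, y` lie in an associative ideal `I`. Hence `δ̃ₖ δ̃ₖ δ̃₁ ⊆ δ̃ₖ₊₁`, and induction on `k` gives
`δ̃₁ ^ (2 ^ k - 1) ⊆ δ̃ₖ`, which vanishes for `k = n`.
-/

namespace PoissonBracket

variable {F P : Type*} [Field F] [CommRing P] [Algebra F P] (pb : PoissonBracket F P)

lemma bracket_swap (a b : P) : pb.bracket b a = -pb.bracket a b := by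
  have h := pb.alt (a + b)
  rw [pb.add_left, pb.add_right, pb.add_right, pb.alt, pb.alt] at h
  linear_combination h

lemma mul_mul_bracket_eq (x y a b : P) :
    x * y * pb.bracket a b = pb.bracket x (y * a) * b - pb.bracket (x * b) (y * a)
      - pb.bracket x y * (a * b) + pb.bracket (x * b) y * a := by
  linear_combination pb.leibniz x b (y * a) - a * pb.leibniz x b y + x * pb.bracket_swap (y * a) b
    - x * pb.leibniz y a b - a * x * pb.bracket_swap y b

lemma mul_top_mul_top_le (S : Submodule F P) : S * ⊤ * ⊤ ≤ S * ⊤ :=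
  calc S * ⊤ * ⊤ = S * (⊤ * ⊤) := mul_assoc _ _ _
    _ ≤ S * ⊤ := mul_le_mul_right le_top S

lemma mul_mem_mul_top {S : Submodule F P} {x : P} (hx : x ∈ S * ⊤) (p : P) : x * p ∈ S * ⊤ :=
  mul_top_mul_top_le S (Submodule.mul_mem_mul hx Submodule.mem_top)

lemma bracket_mul_mem_lieSpan_mul_top {A B : Submodule F P} {u v : P} (hu : u ∈ A) (hv : v ∈ B)
    (p : P) : pb.bracket u v * p ∈ pb.lieSpan A B * ⊤ :=
  Submodule.mul_mem_mul (Submodule.subset_span ⟨u, hu, v, hv, rfl⟩) Submodule.mem_top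

open scoped Pointwise in
lemma mul_mul_lieSpan_top_le {I : Submodule F P} (hI : ∀ x ∈ I, ∀ p : P, x * p ∈ I) :
    I * I * pb.lieSpan ⊤ ⊤ ≤ pb.lieSpan I I * ⊤ := by
  have hspan : I * I * pb.lieSpan ⊤ ⊤ = Submodule.span F
      ((I : Set P) * (I : Set P) * {z | ∃ a ∈ (⊤ : Submodule F P), ∃ b ∈ (⊤ : Submodule F P),
        z = pb.bracket a b}) := by
    rw [lieSpan, ← Submodule.span_mul_span, ← Submodule.span_mul_span, Submodule.span_eq]
  rw [hspan, Submodule.span_le]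
  rintro _ ⟨_, ⟨x, hx, y, hy, rfl⟩, _, ⟨a, -, b, -, rfl⟩, rfl⟩
  have mem {u v : P} (hu : u ∈ I) (hv : v ∈ I) (p : P) := pb.bracket_mul_mem_lieSpan_mul_top hu hv p
  have hya := hI y hy a
  have hxb := hI x hx b
  show x * y * pb.bracket a b ∈ _
  rw [mul_mul_bracket_eq]
  exact add_mem (sub_mem (sub_mem (mem hx hya b) (by simpa using mem hxb hya 1))
    (mem hx hy _)) (mem hxb hy a)

lemma mul_mem_udelta : ∀ {k : ℕ} {x : P}, x ∈ pb.udelta k → ∀ p : P, x * p ∈ pb.udelta k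
  | 0, _, _, _ => Submodule.mem_top
  | _ + 1, _, hx, p => mul_mem_mul_top hx p

lemma udelta_mul_udelta_mul_udelta_one_le (k : ℕ) :
    pb.udelta k * pb.udelta k * pb.udelta 1 ≤ pb.udelta (k + 1) :=
  calc pb.udelta k * pb.udelta k * (pb.lieSpan ⊤ ⊤ * ⊤)
      = pb.udelta k * pb.udelta k * pb.lieSpan ⊤ ⊤ * ⊤ := (mul_assoc _ _ _).symm
    _ ≤ pb.lieSpan (pb.udelta k) (pb.udelta k) * ⊤ * ⊤ :=
      mul_le_mul_left (pb.mul_mul_lieSpan_top_le fun _ hx ↦ pb.mul_mem_udelta hx) ⊤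
    _ ≤ pb.udelta (k + 1) := mul_top_mul_top_le _

lemma udelta_one_pow_le : ∀ k : ℕ, pb.udelta 1 ^ (2 ^ k - 1) ≤ pb.udelta k
  | 0 => le_top
  | k + 1 => by
    have hexp : 2 ^ (k + 1) - 1 = (2 ^ k - 1) + (2 ^ k - 1) + 1 := by
      have := Nat.one_le_two_pow (n := k)
      rw [pow_succ]
      omega
    rw [hexp, pow_add, pow_add, pow_one]
    exact (mul_le_mul_left (mul_le_mul' (udelta_one_pow_le k) (udelta_one_pow_le k)) _).trans
      (pb.udelta_mul_udelta_mul_udelta_one_le k)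

end PoissonBracket

open PoissonBracket

theorem stronglySolvable_udeltaOne_nilpotent_general
    {F P : Type*} [Field F] [CommRing P] [Algebra F P]
    (pb : PoissonBracket F P) (n : ℕ)
    (hzero : pb.udelta n = ⊥) :
    pb.udelta 1 ^ (2 ^ n - 1) = ⊥ :=
  le_bot_iff.mp ((pb.udelta_one_pow_le n).trans hzero.le)

/-- If `P` is strongly solvable with strong derived length `n`, then the Poisson ideal
`δ̃₁(P) = {P,P}P` is associative nilpotent of index at most `2^n - 1`. -/
theorem stronglySolvable_udeltaOne_nilpotent
    {F P : Type*} [Field F] [CommRing P] [Algebra F P]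
    (pb : PoissonBracket F P) (n : ℕ)
    (hzero : pb.udelta n = ⊥) (hmin : ∀ m < n, pb.udelta m ≠ ⊥) :
    pb.udelta 1 ^ (2 ^ n - 1) = ⊥ :=
  stronglySolvable_udeltaOne_nilpotent_general pb n hzero
end

section
/- Let P be a Poisson algebra over a field 𝔽 and let I be a Poisson ideal of P. Then for all a, b, c ∈ I and every positive integer m, ({{a,b},c} − {{b,c},a})·γₘ(I) ⊆ γ_{m+1}(I)·P, i.e. ({{a,b},c} − {{b,c},a})·z ∈ γ_{m+1}(I)·P for every z ∈ γₘ(I). -/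
/-
Write `γₙ` for `lcs I n`. Jacobi gives `{γᵢ, γⱼ} ⊆ γᵢ₊ⱼ`. Applying Leibniz twice,
`{{x*y, c}, w} = x*{{y,c},w} + {y,c}*{x,w} + y*{{x,c},w} + {x,c}*{y,w}`.
For `y ∈ γ₂`, `c, x ∈ I` and `w ∈ γₖ`, every term other than `{y,c}*{x,w}` lies in
`γₖ₊₂·P` (the last because `{y,w} ∈ γₖ₊₂`), hence so does `{y,c}*{w,x}`. As the brackets `{w,x}`
span `γₖ₊₁`, `{y,c}·γₘ ⊆ γₘ₊₁·P` for every `y ∈ γ₂`, `c ∈ I`. Both `{a,b}` and `{b,c}` lie in `γ₂`.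
-/

namespace PoissonBracket

variable {F P : Type*} [Field F] [CommRing P] [Algebra F P] (pb : PoissonBracket F P)

def bracketRight (u : P) : P →ₗ[F] P where
  toFun := pb.bracket u
  map_add' := pb.add_right u
  map_smul' r := pb.smul_right r u

theorem bracket_anticomm (a b : P) : pb.bracket a b = -pb.bracket b a := by
  have h := pb.alt (a + b)
  rw [pb.add_left, pb.add_right, pb.add_right, pb.alt, pb.alt] at h
  linear_combination h

theorem bracket_bracket_right (u w x : P) :
    pb.bracket u (pb.bracket w x) =
      pb.bracket (pb.bracket u w) x + pb.bracket (pb.bracket x u) w := by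
  linear_combination pb.bracket_anticomm u (pb.bracket w x) - pb.jacobi u w x

theorem bracket_bracket_mul_left (x y c w : P) :
    pb.bracket (pb.bracket (x * y) c) w =
      x * pb.bracket (pb.bracket y c) w + pb.bracket y c * pb.bracket x w +
        (y * pb.bracket (pb.bracket x c) w + pb.bracket x c * pb.bracket y w) := by
  rw [pb.leibniz, pb.add_left, pb.leibniz, pb.leibniz]

theorem bracket_mem_lieSpan {A B : Submodule F P} {a b : P} (ha : a ∈ A) (hb : b ∈ B) :
    pb.bracket a b ∈ pb.lieSpan A B :=
  Submodule.subset_span ⟨a, ha, b, hb, rfl⟩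

theorem lieSpan_le_comap {A B S : Submodule F P} (f : P →ₗ[F] P)
    (h : ∀ a ∈ A, ∀ b ∈ B, f (pb.bracket a b) ∈ S) : pb.lieSpan A B ≤ S.comap f :=
  Submodule.span_le.2 <| by
    rintro _ ⟨a, ha, b, hb, rfl⟩
    exact h a ha b hb

variable {pb} {I : Submodule F P}

theorem lcs_le_self (hI : pb.IsPoissonIdeal I) : ∀ n, pb.lcs I n ≤ I
  | 0 | 1 => le_rfl
  | _ + 2 => Submodule.span_le.2 <| by
    rintro _ ⟨a, -, b, hb, rfl⟩
    rw [pb.bracket_anticomm]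
    exact neg_mem (hI.2 b hb a)

theorem lcs_succ {k : ℕ} (hk : 1 ≤ k) : pb.lcs I (k + 1) = pb.lieSpan (pb.lcs I k) I := by
  obtain _ | k := k
  · omega
  · rfl

theorem bracket_mem_lcs_succ {k : ℕ} (hk : 1 ≤ k) {u x : P} (hu : u ∈ pb.lcs I k) (hx : x ∈ I) :
    pb.bracket u x ∈ pb.lcs I (k + 1) := by
  rw [lcs_succ hk]
  exact pb.bracket_mem_lieSpan hu hx

theorem bracket_mem_lcs_add {i j : ℕ} (hi : 1 ≤ i) (hj : 1 ≤ j) {u v : P}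
    (hu : u ∈ pb.lcs I i) (hv : v ∈ pb.lcs I j) : pb.bracket u v ∈ pb.lcs I (i + j) := by
  induction j, hj using Nat.le_induction generalizing i u v with
  | base => exact bracket_mem_lcs_succ hi hu hv
  | succ j hj ih =>
    rw [lcs_succ hj] at hv
    refine pb.lieSpan_le_comap (pb.bracketRight u) (fun w hw x hx => ?_) hv
    change pb.bracket u (pb.bracket w x) ∈ _
    rw [pb.bracket_bracket_right]
    have hxu : pb.bracket x u ∈ pb.lcs I (i + 1) := by
      rw [pb.bracket_anticomm]
      exact neg_mem (bracket_mem_lcs_succ hi hu hx)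
    rw [← add_assoc]
    refine add_mem (bracket_mem_lcs_succ (by omega) (ih hi hu hw) hx) ?_
    rw [← Nat.add_right_comm i 1 j]
    exact ih (by omega) hxu hw

theorem bracket_mem_lcs_add_two {k : ℕ} (hk : 1 ≤ k) {y w : P} (hy : y ∈ pb.lcs I 2)
    (hw : w ∈ pb.lcs I k) : pb.bracket y w ∈ pb.lcs I (k + 2) := by
  rw [add_comm]
  exact bracket_mem_lcs_add (by norm_num) hk hy hw

theorem mem_mul_top {M : Submodule F P} {s : P} (hs : s ∈ M) : s ∈ M * ⊤ :=
  mul_one s ▸ Submodule.mul_mem_mul hs Submodule.mem_top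

theorem bracket_mul_bracket_mem_lcs_mul_top (hI : pb.IsPoissonIdeal I) {k : ℕ} (hk : 1 ≤ k)
    {y c w x : P} (hy : y ∈ pb.lcs I 2) (hc : c ∈ I) (hw : w ∈ pb.lcs I k) (hx : x ∈ I) :
    pb.bracket y c * pb.bracket w x ∈ pb.lcs I (k + 2) * ⊤ := by
  have hyI : y ∈ I := lcs_le_self hI 2 hy
  have hycw := bracket_mem_lcs_add_two hk (pb.bracket_mem_lieSpan hyI hc) hw
  have hxcw := bracket_mem_lcs_add_two hk (pb.bracket_mem_lieSpan hx hc) hw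
  have hyw := bracket_mem_lcs_add_two hk hy hw
  have hsplit : pb.bracket y c * pb.bracket x w = pb.bracket (pb.bracket (x * y) c) w -
      (x * pb.bracket (pb.bracket y c) w + y * pb.bracket (pb.bracket x c) w +
        pb.bracket x c * pb.bracket y w) := by
    rw [pb.bracket_bracket_mul_left]
    ring
  rw [pb.bracket_anticomm w x, mul_neg, neg_mem_iff, hsplit]
  refine sub_mem (mem_mul_top ?_) (add_mem (add_mem ?_ ?_) ?_)
  · exact bracket_mem_lcs_add_two hk (pb.bracket_mem_lieSpan (hI.1 y hyI x) hc) hw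
  · exact Submodule.mul_mem_mul_rev hycw Submodule.mem_top
  · exact Submodule.mul_mem_mul_rev hxcw Submodule.mem_top
  · exact Submodule.mul_mem_mul_rev hyw Submodule.mem_top

theorem bracket_mul_mem_lcs_succ_mul_top (hI : pb.IsPoissonIdeal I) {y c : P}
    (hy : y ∈ pb.lcs I 2) (hc : c ∈ I) :
    ∀ {m : ℕ}, ∀ z ∈ pb.lcs I m, pb.bracket y c * z ∈ pb.lcs I (m + 1) * ⊤
  | 0, z, _ => Submodule.mul_mem_mul (hI.2 y (lcs_le_self hI 2 hy) c) Submodule.mem_top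
  | 1, z, _ => Submodule.mul_mem_mul (pb.bracket_mem_lieSpan (lcs_le_self hI 2 hy) hc)
      Submodule.mem_top
  | k + 2, z, hz =>
    pb.lieSpan_le_comap (LinearMap.mulLeft F (pb.bracket y c))
      (fun _ hw _ hx => bracket_mul_bracket_mem_lcs_mul_top hI (by omega) hy hc hw hx) hz

end PoissonBracket

open PoissonBracket

theorem bracket_skew_mul_lcs_mem_general
    {F P : Type*} [Field F] [CommRing P] [Algebra F P]
    (pb : PoissonBracket F P) (I : Submodule F P) (hI : pb.IsPoissonIdeal I)
    (a b c : P) (ha : a ∈ I) (hb : b ∈ I) (hc : c ∈ I)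
    (m : ℕ) :
    ∀ z ∈ pb.lcs I m,
      (pb.bracket (pb.bracket a b) c - pb.bracket (pb.bracket b c) a) * z ∈
        pb.lcs I (m + 1) * ⊤ := by
  intro z hz
  rw [sub_mul]
  exact sub_mem
    (bracket_mul_mem_lcs_succ_mul_top hI (pb.bracket_mem_lieSpan ha hb) hc z hz)
    (bracket_mul_mem_lcs_succ_mul_top hI (pb.bracket_mem_lieSpan hb hc) ha z hz)

/-- For a Poisson ideal `I` and `a, b, c ∈ I`,
`({{a,b},c} - {{b,c},a})·γₘ(I) ⊆ γ_{m+1}(I)·P` for every positive integer `m`. -/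
theorem bracket_skew_mul_lcs_mem
    {F P : Type*} [Field F] [CommRing P] [Algebra F P]
    (pb : PoissonBracket F P) (I : Submodule F P) (hI : pb.IsPoissonIdeal I)
    (a b c : P) (ha : a ∈ I) (hb : b ∈ I) (hc : c ∈ I)
    (m : ℕ) (hm : 1 ≤ m) :
    ∀ z ∈ pb.lcs I m,
      (pb.bracket (pb.bracket a b) c - pb.bracket (pb.bracket b c) a) * z ∈
        pb.lcs I (m + 1) * ⊤ :=
  bracket_skew_mul_lcs_mem_general pb I hI a b c ha hb hc m
end

section
/- Let P be a reduced Poisson algebra over a field 𝔽 (P has no nonzero nilpotent elements). Then P is strongly solvable if and only if P is abelian, i.e. {P,P} = 0. -/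
/-!
If `δ̃ₙ₊₂(P) = 0` then `{u·a, u·b} = 0` for every bracket `u = {x, y}` of elements `x, y` of
`δ̃ₙ(P)` and all `a, b ∈ P`, since `u·a` and `u·b` lie in `δ̃ₙ₊₁(P)`. Expanding `{u·x, u·y}` with
the Leibniz rule gives `u³ = 0`, so `u = 0` in a reduced algebra and `δ̃ₙ₊₁(P) = 0`. Descending,
strong solvability forces `δ̃₁(P) = {P, P}·P = 0`.
-/

namespace PoissonBracket

variable {F P : Type*} [Field F] [CommRing P] [Algebra F P] (pb : PoissonBracket F P)

lemma bracket_add_bracket_swap (a b : P) : pb.bracket a b + pb.bracket b a = 0 := by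
  have h := pb.alt (a + b)
  rw [pb.add_left, pb.add_right, pb.add_right, pb.alt, pb.alt] at h
  linear_combination h

lemma leibniz_right (a b c : P) :
    pb.bracket a (b * c) = b * pb.bracket a c + c * pb.bracket a b := by
  linear_combination pb.bracket_add_bracket_swap a (b * c) - pb.leibniz b c a -
    b * pb.bracket_add_bracket_swap c a - c * pb.bracket_add_bracket_swap b a

lemma bracket_eq_zero_of_forall_bracket_mul_eq_zero [IsReduced P] {x y : P}
    (h : ∀ a b : P, pb.bracket (pb.bracket x y * a) (pb.bracket x y * b) = 0) :
    pb.bracket x y = 0 := by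
  set u := pb.bracket x y with hu
  have hmul_bracket (a : P) : u * pb.bracket a u = 0 := by
    have := h a 1
    rw [mul_one, pb.leibniz, pb.alt] at this
    simpa using this
  -- `{u x, u y} = u³ + u y {x, u} + x u {u, y}`
  have hcube : u ^ 3 = 0 := by
    linear_combination h x y - pb.leibniz u x (u * y) - u * pb.leibniz_right x u y -
      x * pb.leibniz_right u u y - x * y * pb.alt u - y * hmul_bracket x + x * hmul_bracket y -
      x * u * pb.bracket_add_bracket_swap u y + u ^ 2 * hu
  exact IsNilpotent.eq_zero ⟨3, hcube⟩

lemma mul_mem_udelta_succ {n : ℕ} {x y : P} (hx : x ∈ pb.udelta n) (hy : y ∈ pb.udelta n)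
    (a : P) : pb.bracket x y * a ∈ pb.udelta (n + 1) :=
  Submodule.mul_mem_mul (Submodule.subset_span ⟨x, hx, y, hy, rfl⟩) Submodule.mem_top

lemma udelta_succ_eq_bot_iff (n : ℕ) :
    pb.udelta (n + 1) = ⊥ ↔ ∀ x ∈ pb.udelta n, ∀ y ∈ pb.udelta n, pb.bracket x y = 0 := by
  constructor
  · intro h x hx y hy
    simpa [h] using pb.mul_mem_udelta_succ hx hy 1
  · intro h
    have hspan : pb.lieSpan (pb.udelta n) (pb.udelta n) = ⊥ := by
      rw [lieSpan, Submodule.span_eq_bot]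
      rintro z ⟨x, hx, y, hy, rfl⟩
      exact h x hx y hy
    rw [udelta, hspan, Submodule.bot_mul]

lemma udelta_succ_eq_bot_of_udelta_succ_succ_eq_bot [IsReduced P] {n : ℕ}
    (h : pb.udelta (n + 2) = ⊥) : pb.udelta (n + 1) = ⊥ := by
  rw [udelta_succ_eq_bot_iff]
  intro x hx y hy
  refine pb.bracket_eq_zero_of_forall_bracket_mul_eq_zero fun a b => ?_
  exact (pb.udelta_succ_eq_bot_iff (n + 1)).1 h _ (pb.mul_mem_udelta_succ hx hy a) _
    (pb.mul_mem_udelta_succ hx hy b)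

lemma udelta_one_eq_bot_of_udelta_eq_bot [IsReduced P] :
    ∀ {n : ℕ}, pb.udelta n = ⊥ → pb.udelta 1 = ⊥
  | 0, h => eq_bot_mono le_top h
  | 1, h => h
  | _ + 2, h =>
    udelta_one_eq_bot_of_udelta_eq_bot (pb.udelta_succ_eq_bot_of_udelta_succ_succ_eq_bot h)

end PoissonBracket

open PoissonBracket

/-- A reduced Poisson algebra is strongly solvable iff it is abelian. -/
theorem reduced_stronglySolvable_iff_abelian
    {F P : Type*} [Field F] [CommRing P] [Algebra F P] [IsReduced P]
    (pb : PoissonBracket F P) :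
    (∃ n : ℕ, pb.udelta n = ⊥) ↔ ∀ x y : P, pb.bracket x y = 0 := by
  constructor
  · rintro ⟨n, hn⟩ x y
    exact (pb.udelta_succ_eq_bot_iff 0).1 (pb.udelta_one_eq_bot_of_udelta_eq_bot hn)
      x Submodule.mem_top y Submodule.mem_top
  · intro h
    exact ⟨1, (pb.udelta_succ_eq_bot_iff 0).2 fun x _ y _ => h x y⟩
end
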